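/- Assume a satisfies hypothesis (H2) and let l_n(k) := k + a_n(k−1)² − a_n(k)² for k ≥ 1. Then there is a constant C₀ > 0 such that sup_{k≥1} |l_n(k+1) − l_n(k) − 1| ≤ C₀ n^{2γ−2} for all n ≥ 1; in particular, for every ε > 0 there exists n(ε) such that |l_n(k+1) − l_n(k) − 1| < ε for all n ≥ n(ε) and all k ∈ ℕ*. -/

import Mathlib

open scoped Real

noncomputable section

/-- Mean value `⟨v⟩` of the `N`-periodic function `v`. -/
def meanv (v : ℤ → ℝ) (N : ℕ) : ℝ := (∑ k ∈ Finset.Icc (1 : ℤ) (N : ℤ), v k) / N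

/-- `ρ_N`, the maximum deviation of `v` from its mean value over one period. -/
def rhoN (v : ℤ → ℝ) (N : ℕ) : ℝ :=
  sSup ((fun k => |v k - meanv v N|) '' Set.Icc (1 : ℤ) (N : ℤ))

/-- Hypothesis (H1): `v` is `N`-periodic (`N ≥ 1`) and weakly dispersive. -/
def HypH1 (v : ℤ → ℝ) (N : ℕ) : Prop :=
  1 ≤ N ∧ (∀ k : ℤ, v (k + N) = v k) ∧
    (N = 2 → rhoN v N < 1 / 2) ∧
    (3 ≤ N → rhoN v N < 1 / (Real.pi * Real.sqrt N))

/-- Hypothesis (H2): `a(k) ≍ k^γ` with `C²` regularity. -/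
def HypH2 (a : ℤ → ℝ) (γ : ℝ) : Prop :=
  0 < γ ∧ γ ≤ 1 / 2 ∧
    ∃ c C C' C'' : ℝ, 0 < c ∧ 0 < C ∧ 0 < C' ∧ 0 < C'' ∧
      ∀ k : ℤ, 1 ≤ k →
        c * (k : ℝ) ^ γ ≤ a k ∧ a k ≤ C * (k : ℝ) ^ γ ∧
        |a (k + 1) - a k| ≤ C' * (k : ℝ) ^ (γ - 1) ∧
        |a (k + 2) - 2 * a (k + 1) + a k| ≤ C'' * (k : ℝ) ^ (γ - 2)

/-- A smooth cut-off function `θ₀`, equal to `1` on `{|t| ≤ 1/6}`, to `0` on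
`{|t| ≥ 1/5}`, with values in `[0,1]`. -/
def IsCutoff (θ : ℝ → ℝ) : Prop :=
  ContDiff ℝ (⊤ : ℕ∞) θ ∧ (∀ t : ℝ, |t| ≤ 1 / 6 → θ t = 1) ∧
    (∀ t : ℝ, 1 / 5 ≤ |t| → θ t = 0) ∧ ∀ t : ℝ, 0 ≤ θ t ∧ θ t ≤ 1

/-- The modified off-diagonal entries
`a_n(k) = (a(n) + (k-n)·δa(n))·θ₀((k-n)/(2n))`. -/
def an (θ : ℝ → ℝ) (a : ℤ → ℝ) (n : ℕ) (k : ℤ) : ℝ :=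
  (a (n : ℤ) + ((k : ℝ) - n) * (a ((n : ℤ) + 1) - a (n : ℤ))) *
    θ (((k : ℝ) - n) / (2 * n))

/-- The modified diagonal entries `d_n(k) = k + v(k)·θ₀((k-n)/n)²`. -/
def dn (θ : ℝ → ℝ) (v : ℤ → ℝ) (n : ℕ) (k : ℤ) : ℝ :=
  (k : ℝ) + v k * (θ (((k : ℝ) - n) / n)) ^ 2

/-- The cut-off periodic perturbation `v_n(k) = v(k)·θ₀((k-n)/n)²`. -/
def vn (θ : ℝ → ℝ) (v : ℤ → ℝ) (n : ℕ) (k : ℤ) : ℝ :=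
  v k * (θ (((k : ℝ) - n) / n)) ^ 2

/-- `l_n(k) = k + a_n(k-1)² - a_n(k)²` for `k ≥ 1`, and `l_n(k) = k` for `k ≤ 0`;
in particular `l(n) = l_n(n)`. -/
def lseq (θ : ℝ → ℝ) (a : ℤ → ℝ) (n : ℕ) (k : ℤ) : ℝ :=
  if 1 ≤ k then (k : ℝ) + (an θ a n (k - 1)) ^ 2 - (an θ a n k) ^ 2 else (k : ℝ)

lemma aux_deriv_zero {g : ℝ → ℝ} {r : ℝ} (hr : 0 < r)
    (h0 : ∀ t, r ≤ |t| → g t = 0) {t : ℝ} (ht : 2 * r ≤ |t|) : deriv g t = 0 := by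
  have hev : g =ᶠ[nhds t] fun _ => 0 := by
    filter_upwards [Metric.ball_mem_nhds t hr] with s hs
    apply h0
    have h1 : |s - t| < r := by simpa [Real.dist_eq] using hs
    have h2 : |t| - |s| ≤ |t - s| := abs_sub_abs_le_abs_sub t s
    have h3 : |t - s| = |s - t| := abs_sub_comm t s
    linarith
  rw [hev.deriv_eq]
  simp

lemma aux_bound {g : ℝ → ℝ} (hg : Continuous g) (h0 : ∀ t, 1 ≤ |t| → g t = 0) :
    ∃ K, 0 ≤ K ∧ ∀ x, |g x| ≤ K := by
  obtain ⟨x₀, _, hmax⟩ := isCompact_Icc.exists_isMaxOn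
    (Set.nonempty_Icc.2 (by norm_num : (-1:ℝ) ≤ 1)) (hg.abs.continuousOn)
  refine ⟨|g x₀|, abs_nonneg _, fun x => ?_⟩
  by_cases hx : |x| ≤ 1
  · exact hmax (abs_le.1 hx)
  · rw [h0 x (not_le.1 hx).le]
    simp

lemma aux_mvt {g : ℝ → ℝ} (hg : Differentiable ℝ g) {x y : ℝ} (hxy : x < y) :
    ∃ ξ ∈ Set.Ioo x y, g y - g x = deriv g ξ * (y - x) := by
  obtain ⟨ξ, hξ, hs⟩ := exists_hasDerivAt_eq_slope g (deriv g) hxy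
    hg.continuous.continuousOn (fun z _ => (hg z).hasDerivAt)
  refine ⟨ξ, hξ, ?_⟩
  rw [hs, div_mul_cancel₀]
  linarith

lemma aux_lip {g : ℝ → ℝ} (hg : Differentiable ℝ g) {K : ℝ}
    (hK : ∀ x, |deriv g x| ≤ K) (x y : ℝ) : |g y - g x| ≤ K * |y - x| := by
  rcases lt_trichotomy x y with h | h | h
  · obtain ⟨ξ, _, hξ⟩ := aux_mvt hg h
    rw [hξ, abs_mul]
    exact mul_le_mul_of_nonneg_right (hK ξ) (abs_nonneg _)
  · simp [h]
  · obtain ⟨ξ, _, hξ⟩ := aux_mvt hg h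
    rw [abs_sub_comm, hξ, abs_mul, abs_sub_comm x y]
    exact mul_le_mul_of_nonneg_right (hK ξ) (abs_nonneg _)

lemma aux_second {g : ℝ → ℝ} (hg : Differentiable ℝ g) {K : ℝ}
    (hK : ∀ x y, |deriv g y - deriv g x| ≤ K * |y - x|) (x h : ℝ) (hh : 0 < h) :
    |g (x + 2 * h) - 2 * g (x + h) + g x| ≤ 2 * K * h ^ 2 := by
  have hK0 : 0 ≤ K := by
    have h1 := hK 0 1
    simp at h1
    exact le_trans (abs_nonneg _) h1
  obtain ⟨ξ₁, hξ₁, e₁⟩ := aux_mvt hg (show x + h < x + 2 * h by linarith)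
  obtain ⟨ξ₂, hξ₂, e₂⟩ := aux_mvt hg (show x < x + h by linarith)
  have key : g (x + 2 * h) - 2 * g (x + h) + g x
      = (deriv g ξ₁ - deriv g ξ₂) * h := by
    have e₁' : g (x + 2 * h) - g (x + h) = deriv g ξ₁ * h := by
      rw [e₁]; ring
    have e₂' : g (x + h) - g x = deriv g ξ₂ * h := by
      rw [e₂]; ring
    linarith [e₁', e₂']
  rw [key, abs_mul, abs_of_pos hh]
  have hd : |deriv g ξ₁ - deriv g ξ₂| ≤ K * (2 * h) := by
    calc |deriv g ξ₁ - deriv g ξ₂| ≤ K * |ξ₁ - ξ₂| := hK ξ₂ ξ₁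
      _ ≤ K * (2 * h) := by
          apply mul_le_mul_of_nonneg_left _ hK0
          rw [abs_le]
          obtain ⟨a1, a2⟩ := hξ₁; obtain ⟨b1, b2⟩ := hξ₂
          constructor <;> linarith
  nlinarith

set_option maxHeartbeats 1000000 in
lemma aux_sq_ineq (A B D : ℝ) :
    |2*B^2 - A^2 - D^2| ≤ |A-B|^2 + |B-D|^2 + 2 * (|B| * |A - 2*B + D|) := by
  rw [← abs_mul, abs_le]
  constructor <;>
    nlinarith [sq_abs (A-B), sq_abs (B-D), le_abs_self (B*(A-2*B+D)),
      neg_abs_le (B*(A-2*B+D)), sq_nonneg (A-B), sq_nonneg (B-D)]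

set_option maxHeartbeats 1000000 in
/-- **Lemma 3.2.**
Under (H2), the sequence `l_n(k) = k + a_n(k-1)² - a_n(k)²` satisfies
`sup_{k ≥ 1} |l_n(k+1) - l_n(k) - 1| ≤ C₀ n^{2γ-2}`; in particular for every
`ε > 0` there is `n(ε)` such that `|l_n(k+1) - l_n(k) - 1| < ε` for all
`n ≥ n(ε)` and all `k ≥ 1`. -/
theorem lseq_increments_close_to_one
    (a : ℤ → ℝ) (γ : ℝ) (ha : HypH2 a γ)
    (θ₀ : ℝ → ℝ) (hθ₀ : IsCutoff θ₀) :
    (∃ C₀ > 0, ∀ n : ℕ, 1 ≤ n → ∀ k : ℤ, 1 ≤ k →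
      |lseq θ₀ a n (k + 1) - lseq θ₀ a n k - 1| ≤ C₀ * (n : ℝ) ^ (2 * γ - 2)) ∧
    ∀ ε > 0, ∃ nε : ℕ, ∀ n : ℕ, nε ≤ n → ∀ k : ℤ, 1 ≤ k →
      |lseq θ₀ a n (k + 1) - lseq θ₀ a n k - 1| < ε := by
  obtain ⟨hγ0, hγhalf, c, C, C', C'', hc, hC, hC', hC'', hbound⟩ := ha
  obtain ⟨hsmooth, _hone, hzero, hrange⟩ := hθ₀
  have hd1 : Differentiable ℝ θ₀ := hsmooth.differentiable (by simp)
  have hsm : ContDiff ℝ (⊤:ℕ∞) θ₀ := hsmooth.of_le (by simp)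
  have hc1 : ContDiff ℝ (⊤:ℕ∞) (deriv θ₀) := (contDiff_infty_iff_deriv.mp hsm).2
  have hd2 : Differentiable ℝ (deriv θ₀) := hc1.differentiable (by simp)
  have hz1 : ∀ t : ℝ, (2/5 : ℝ) ≤ |t| → deriv θ₀ t = 0 := fun t ht =>
    aux_deriv_zero (by norm_num : (0:ℝ) < 1/5) hzero (by linarith)
  have hz2 : ∀ t : ℝ, (1:ℝ) ≤ |t| → deriv (deriv θ₀) t = 0 := fun t ht =>
    aux_deriv_zero (by norm_num : (0:ℝ) < 2/5) hz1 (by linarith)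
  obtain ⟨K₁, hK₁0, hK₁⟩ := aux_bound hc1.continuous (fun t ht => hz1 t (by linarith))
  obtain ⟨K₂, hK₂0, hK₂⟩ :=
    aux_bound (hc1.continuous_deriv (by exact_mod_cast le_top)) hz2
  have hlip1 : ∀ x y : ℝ, |θ₀ y - θ₀ x| ≤ K₁ * |y - x| := aux_lip hd1 hK₁
  have hlip2 : ∀ x y : ℝ, |deriv θ₀ y - deriv θ₀ x| ≤ K₂ * |y - x| := aux_lip hd2 hK₂
  have hsec : ∀ x h : ℝ, 0 < h →
      |θ₀ (x + 2*h) - 2*θ₀ (x+h) + θ₀ x| ≤ 2*K₂*h^2 :=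
    fun x h hh => aux_second hd1 hlip2 x h hh
  have hTab : ∀ x : ℝ, |θ₀ x| ≤ 1 := fun x =>
    abs_le.2 ⟨by linarith [(hrange x).1], (hrange x).2⟩
  set M₁ : ℝ := C' + (C + 3*C') * (K₁/2) with hM₁def
  set M₂ : ℝ := (C + 3*C') * (K₂/2) + C' * K₁ with hM₂def
  set C₀ : ℝ := 2*M₁^2 + 2*(C+3*C')*M₂ with hC₀def
  have hCC' : (0:ℝ) < C + 3*C' := by linarith
  have hM₁pos : 0 < M₁ := by
    have := mul_nonneg hCC'.le (by linarith : (0:ℝ) ≤ K₁/2)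
    rw [hM₁def]; linarith
  have hM₂0 : 0 ≤ M₂ := by
    have h1 := mul_nonneg hCC'.le (by linarith : (0:ℝ) ≤ K₂/2)
    have h2 := mul_nonneg hC'.le hK₁0
    rw [hM₂def]; linarith
  have hC₀pos : 0 < C₀ := by
    have h1 := mul_nonneg hCC'.le hM₂0
    rw [hC₀def]; nlinarith
  have main : ∀ n : ℕ, 1 ≤ n → ∀ k : ℤ, 1 ≤ k →
      |lseq θ₀ a n (k + 1) - lseq θ₀ a n k - 1| ≤ C₀ * (n : ℝ) ^ (2 * γ - 2) := by
    intro n hn k hk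
    have hN1 : (1:ℝ) ≤ (n:ℝ) := by exact_mod_cast hn
    have hN0 : (0:ℝ) < (n:ℝ) := by linarith
    have hNne : ((n:ℝ)) ≠ 0 := ne_of_gt hN0
    have e1 : (n:ℝ) * (n:ℝ)^(γ-1) = (n:ℝ)^γ := by
      have h := Real.rpow_add hN0 1 (γ-1)
      rw [show (1:ℝ)+(γ-1) = γ by ring, Real.rpow_one] at h
      linarith
    have e2 : (n:ℝ) * (n:ℝ)^(γ-2) = (n:ℝ)^(γ-1) := by
      have h := Real.rpow_add hN0 1 (γ-2)
      rw [show (1:ℝ)+(γ-2) = γ-1 by ring, Real.rpow_one] at h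
      linarith
    have e3 : (n:ℝ)^(γ-1) * (n:ℝ)^(γ-1) = (n:ℝ)^(2*γ-2) := by
      have h := Real.rpow_add hN0 (γ-1) (γ-1)
      rw [show (γ-1)+(γ-1) = 2*γ-2 by ring] at h
      linarith
    have e4 : (n:ℝ)^γ * (n:ℝ)^(γ-2) = (n:ℝ)^(2*γ-2) := by
      have h := Real.rpow_add hN0 γ (γ-2)
      rw [show γ+(γ-2) = 2*γ-2 by ring] at h
      linarith
    have hg0 : (0:ℝ) < (n:ℝ)^γ := Real.rpow_pos_of_pos hN0 γ
    have hg1 : (0:ℝ) < (n:ℝ)^(γ-1) := Real.rpow_pos_of_pos hN0 _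
    have hg2 : (0:ℝ) < (n:ℝ)^(γ-2) := Real.rpow_pos_of_pos hN0 _
    obtain ⟨hal, hau, hda, -⟩ := hbound (n:ℤ) (by exact_mod_cast hn)
    push_cast at hal hau hda
    have han0 : 0 ≤ a (n:ℤ) := le_trans (by positivity) hal
    have hanab : |a (n:ℤ)| ≤ C * (n:ℝ)^γ := by rw [abs_of_nonneg han0]; exact hau
    set d : ℝ := a ((n:ℤ)+1) - a (n:ℤ) with hdd
    have hdab : |d| ≤ C' * (n:ℝ)^(γ-1) := hda
    -- support of the cutoff
    have hTsupp : ∀ x : ℝ, θ₀ ((x - n)/(2*n)) ≠ 0 → |x - n| < 2*n/5 := by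
      intro x hx
      by_contra hcon
      push_neg at hcon
      apply hx
      apply hzero
      rw [abs_div, abs_of_pos (by linarith : (0:ℝ) < 2*(n:ℝ)), le_div_iff₀ (by linarith)]
      linarith
    -- bound for the linear part
    have hLb : ∀ x : ℝ, |x - n| ≤ 3*n → |a (n:ℤ) + (x-n)*d| ≤ (C+3*C')*(n:ℝ)^γ := by
      intro x hx
      calc |a (n:ℤ) + (x-n)*d| ≤ |a (n:ℤ)| + |x-n| * |d| :=
            (abs_add_le _ _).trans (by rw [abs_mul])
        _ ≤ C * (n:ℝ)^γ + (3*n) * (C' * (n:ℝ)^(γ-1)) := by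
            have := mul_le_mul hx hdab (abs_nonneg d) (by linarith)
            linarith
        _ = (C+3*C')*(n:ℝ)^γ := by
            linear_combination (3*C') * e1
    have hfLT : ∀ j : ℤ, an θ₀ a n j
        = (a (n:ℤ) + ((j:ℝ)-n)*d) * θ₀ (((j:ℝ) - n)/(2*n)) := fun j => rfl
    -- increments of the cutoff
    have hδT : ∀ x : ℝ, |θ₀ ((x+1-n)/(2*n)) - θ₀ ((x-n)/(2*n))| ≤ K₁/(2*n) := by
      intro x
      have h := hlip1 ((x-n)/(2*n)) ((x+1-n)/(2*n))
      have e : |(x+1-(n:ℝ))/(2*n) - (x-n)/(2*n)| = 1/(2*n) := by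
        rw [div_sub_div_same, show (x+1-(n:ℝ)) - (x-n) = (1:ℝ) by ring]
        rw [abs_of_pos (by positivity)]
      rw [e] at h
      calc _ ≤ K₁ * (1/(2*(n:ℝ))) := h
        _ = K₁/(2*(n:ℝ)) := by ring
    have hdT2 : ∀ x : ℝ, |θ₀ ((x+2-n)/(2*n)) - 2*θ₀ ((x+1-n)/(2*n)) + θ₀ ((x-n)/(2*n))|
        ≤ K₂/(2*(n:ℝ)^2) := by
      intro x
      have h := hsec ((x-n)/(2*n)) (1/(2*n)) (by positivity)
      rw [show (x-(n:ℝ))/(2*n) + 2*(1/(2*n)) = (x+2-n)/(2*n) by field_simp; ring,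
          show (x-(n:ℝ))/(2*n) + 1/(2*n) = (x+1-n)/(2*n) by field_simp; ring] at h
      calc _ ≤ 2*K₂*(1/(2*(n:ℝ)))^2 := h
        _ = K₂/(2*(n:ℝ)^2) := by field_simp
    -- zeroth order bound
    have hB0 : ∀ j : ℤ, |an θ₀ a n j| ≤ (C+3*C') * (n:ℝ)^γ := by
      intro j
      by_cases hT : θ₀ (((j:ℝ) - n)/(2*n)) = 0
      · rw [hfLT, hT, mul_zero, abs_zero]
        exact mul_nonneg hCC'.le hg0.le
      · have hj := hTsupp (j:ℝ) hT
        rw [hfLT, abs_mul]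
        calc |a (n:ℤ) + ((j:ℝ)-n)*d| * |θ₀ (((j:ℝ) - n)/(2*n))|
            ≤ ((C+3*C') * (n:ℝ)^γ) * 1 :=
              mul_le_mul (hLb (j:ℝ) (by linarith)) (hTab _) (abs_nonneg _) (mul_nonneg hCC'.le hg0.le)
          _ = (C+3*C') * (n:ℝ)^γ := mul_one _
    -- first difference bound
    have hB1 : ∀ j : ℤ, |an θ₀ a n (j+1) - an θ₀ a n j| ≤ M₁ * (n:ℝ)^(γ-1) := by
      intro j
      have cj1 : ((j+1 : ℤ):ℝ) = (j:ℝ)+1 := by push_cast; ring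
      by_cases hT : θ₀ (((j:ℝ)-n)/(2*n)) = 0 ∧ θ₀ (((j:ℝ)+1-n)/(2*n)) = 0
      · rw [hfLT, hfLT, cj1, hT.1, hT.2, mul_zero, mul_zero, sub_zero, abs_zero]
        positivity
      · have hjb : |(j:ℝ) - n| ≤ 3*n := by
          rcases not_and_or.mp hT with h | h
          · have := hTsupp (j:ℝ) h
            have h2 := abs_lt.1 this
            rw [abs_le]; constructor <;> linarith [h2.1, h2.2]
          · have := hTsupp ((j:ℝ)+1) h
            have h2 := abs_lt.1 this
            rw [abs_le]; constructor <;> linarith [h2.1, h2.2]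
        have hLj := hLb (j:ℝ) hjb
        have key : an θ₀ a n (j+1) - an θ₀ a n j
            = d * θ₀ (((j:ℝ)+1-n)/(2*n))
              + (a (n:ℤ) + ((j:ℝ)-n)*d) * (θ₀ (((j:ℝ)+1-n)/(2*n)) - θ₀ (((j:ℝ)-n)/(2*n))) := by
          rw [hfLT, hfLT, cj1]; ring
        rw [key]
        calc |d * θ₀ (((j:ℝ)+1-n)/(2*n))
              + (a (n:ℤ) + ((j:ℝ)-n)*d) * (θ₀ (((j:ℝ)+1-n)/(2*n)) - θ₀ (((j:ℝ)-n)/(2*n)))|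
            ≤ |d| * |θ₀ (((j:ℝ)+1-n)/(2*n))|
              + |a (n:ℤ) + ((j:ℝ)-n)*d| * |θ₀ (((j:ℝ)+1-n)/(2*n)) - θ₀ (((j:ℝ)-n)/(2*n))| :=
              (abs_add_le _ _).trans (by rw [abs_mul, abs_mul])
          _ ≤ (C' * (n:ℝ)^(γ-1)) * 1 + ((C+3*C')*(n:ℝ)^γ) * (K₁/(2*n)) := by
              have t1 := mul_le_mul hdab (hTab (((j:ℝ)+1-n)/(2*n))) (abs_nonneg _)
                (mul_nonneg hC'.le hg1.le)
              have t2 := mul_le_mul hLj (hδT (j:ℝ)) (abs_nonneg _)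
                (mul_nonneg hCC'.le hg0.le)
              linarith
          _ = M₁ * (n:ℝ)^(γ-1) := by
              rw [hM₁def, ← e1]; field_simp
    -- second difference bound
    have hB2 : ∀ j : ℤ, |an θ₀ a n (j+2) - 2*an θ₀ a n (j+1) + an θ₀ a n j|
        ≤ M₂ * (n:ℝ)^(γ-2) := by
      intro j
      have cj1 : ((j+1 : ℤ):ℝ) = (j:ℝ)+1 := by push_cast; ring
      have cj2 : ((j+2 : ℤ):ℝ) = (j:ℝ)+2 := by push_cast; ring
      by_cases hT : θ₀ (((j:ℝ)-n)/(2*n)) = 0 ∧ θ₀ (((j:ℝ)+1-n)/(2*n)) = 0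
          ∧ θ₀ (((j:ℝ)+2-n)/(2*n)) = 0
      · rw [hfLT, hfLT, hfLT, cj1, cj2, hT.1, hT.2.1, hT.2.2, mul_zero, mul_zero, mul_zero]
        simp only [sub_zero, add_zero, mul_zero, abs_zero]
        exact mul_nonneg hM₂0 hg2.le
      · have hjb : |(j:ℝ) + 2 - n| ≤ 3*n := by
          rcases not_and_or.mp hT with h | h'
          · have h2 := abs_lt.1 (hTsupp (j:ℝ) h)
            rw [abs_le]; constructor <;> linarith [h2.1, h2.2]
          · rcases not_and_or.mp h' with h | h
            · have h2 := abs_lt.1 (hTsupp ((j:ℝ)+1) h)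
              rw [abs_le]; constructor <;> linarith [h2.1, h2.2]
            · have h2 := abs_lt.1 (hTsupp ((j:ℝ)+2) h)
              rw [abs_le]; constructor <;> linarith [h2.1, h2.2]
        have hLj := hLb ((j:ℝ)+2) hjb
        have key : an θ₀ a n (j+2) - 2*an θ₀ a n (j+1) + an θ₀ a n j
            = (a (n:ℤ) + ((j:ℝ)+2-n)*d)
                * (θ₀ (((j:ℝ)+2-n)/(2*n)) - 2*θ₀ (((j:ℝ)+1-n)/(2*n)) + θ₀ (((j:ℝ)-n)/(2*n)))
              + 2*(d * (θ₀ (((j:ℝ)+1-n)/(2*n)) - θ₀ (((j:ℝ)-n)/(2*n)))) := by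
          rw [hfLT, hfLT, hfLT, cj1, cj2]; ring
        rw [key]
        calc _ ≤ |a (n:ℤ) + ((j:ℝ)+2-n)*d|
                * |θ₀ (((j:ℝ)+2-n)/(2*n)) - 2*θ₀ (((j:ℝ)+1-n)/(2*n)) + θ₀ (((j:ℝ)-n)/(2*n))|
              + 2*(|d| * |θ₀ (((j:ℝ)+1-n)/(2*n)) - θ₀ (((j:ℝ)-n)/(2*n))|) :=
              (abs_add_le _ _).trans (by rw [abs_mul, abs_mul, abs_mul]; rw [abs_of_pos (by norm_num : (0:ℝ) < 2)])
          _ ≤ ((C+3*C')*(n:ℝ)^γ) * (K₂/(2*(n:ℝ)^2))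
              + 2*((C' * (n:ℝ)^(γ-1)) * (K₁/(2*n))) := by
              have t1 := mul_le_mul hLj (hdT2 (j:ℝ)) (abs_nonneg _)
                (mul_nonneg hCC'.le hg0.le)
              have t2 := mul_le_mul hdab (hδT (j:ℝ)) (abs_nonneg _)
                (mul_nonneg hC'.le hg1.le)
              linarith
          _ = M₂ * (n:ℝ)^(γ-2) := by
              rw [hM₂def, ← e1, ← e2]; field_simp
    -- conclusion
    have hk1 : (1:ℤ) ≤ k + 1 := by omega
    have hexpr : lseq θ₀ a n (k + 1) - lseq θ₀ a n k - 1
        = 2*(an θ₀ a n k)^2 - (an θ₀ a n (k+1))^2 - (an θ₀ a n (k-1))^2 := by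
      have e : k + 1 - 1 = k := by ring
      unfold lseq
      rw [if_pos hk1, if_pos hk, e]
      push_cast; ring
    rw [hexpr]
    set A := an θ₀ a n (k+1) with hA
    set B := an θ₀ a n k with hB
    set D := an θ₀ a n (k-1) with hD
    have hAB : |A - B| ≤ M₁*(n:ℝ)^(γ-1) := by
      have h := hB1 k
      rw [← hA, ← hB] at h
      exact h
    have hBD : |B - D| ≤ M₁*(n:ℝ)^(γ-1) := by
      have h := hB1 (k-1)
      rw [show k-1+1 = k by ring, ← hB, ← hD] at h
      exact h
    have hsec2 : |A - 2*B + D| ≤ M₂*(n:ℝ)^(γ-2) := by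
      have h := hB2 (k-1)
      rw [show k-1+2 = k+1 by ring, show k-1+1 = k by ring] at h
      rw [← hA, ← hB, ← hD] at h
      exact h
    have hBb : |B| ≤ (C+3*C')*(n:ℝ)^γ := by
      have h := hB0 k
      rw [← hB] at h
      exact h
    have h1 : |2*B^2 - A^2 - D^2| ≤ |A-B|^2 + |B-D|^2 + 2 * (|B| * |A - 2*B + D|) :=
      aux_sq_ineq A B D
    calc |2*B^2 - A^2 - D^2| ≤ |A-B|^2 + |B-D|^2 + 2 * (|B| * |A - 2*B + D|) := h1
      _ ≤ (M₁*(n:ℝ)^(γ-1))^2 + (M₁*(n:ℝ)^(γ-1))^2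
          + 2*(((C+3*C')*(n:ℝ)^γ)*(M₂*(n:ℝ)^(γ-2))) := by
          have t2 : |A-B|^2 ≤ (M₁*(n:ℝ)^(γ-1))^2 := pow_le_pow_left₀ (abs_nonneg _) hAB 2
          have t3 : |B-D|^2 ≤ (M₁*(n:ℝ)^(γ-1))^2 := pow_le_pow_left₀ (abs_nonneg _) hBD 2
          have t4 : |B| * |A - 2*B + D| ≤ ((C+3*C')*(n:ℝ)^γ)*(M₂*(n:ℝ)^(γ-2)) :=
            mul_le_mul hBb hsec2 (abs_nonneg _) (mul_nonneg hCC'.le hg0.le)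
          linarith
      _ = C₀ * (n:ℝ)^(2*γ-2) := by
          rw [hC₀def]
          linear_combination (2*M₁^2) * e3 + (2*(C+3*C')*M₂) * e4
  refine ⟨⟨C₀, hC₀pos, main⟩, ?_⟩
  intro ε hε
  refine ⟨⌈C₀/ε⌉₊ + 1, fun n hn k hk => ?_⟩
  have hn1 : 1 ≤ n := le_trans (Nat.le_add_left 1 _) hn
  have hN1 : (1:ℝ) ≤ (n:ℝ) := by exact_mod_cast hn1
  have hN0 : (0:ℝ) < (n:ℝ) := by linarith
  refine lt_of_le_of_lt (main n hn1 k hk) ?_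
  have hNgt : C₀/ε < (n:ℝ) := by
    calc C₀/ε ≤ (⌈C₀/ε⌉₊ : ℝ) := Nat.le_ceil _
      _ < (⌈C₀/ε⌉₊ : ℝ) + 1 := by linarith
      _ ≤ (n:ℝ) := by exact_mod_cast hn
  have hrw : (n:ℝ)^(2*γ-2) = ((n:ℝ)^(2-2*γ))⁻¹ := by
    rw [show 2*γ-2 = -(2-2*γ) by ring, Real.rpow_neg hN0.le]
  have hP : (0:ℝ) < (n:ℝ)^(2-2*γ) := Real.rpow_pos_of_pos hN0 _
  have hge : (n:ℝ) ≤ (n:ℝ)^(2-2*γ) := by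
    have h := Real.rpow_le_rpow_of_exponent_le hN1 (by linarith : (1:ℝ) ≤ 2-2*γ)
    rwa [Real.rpow_one] at h
  rw [hrw]
  have hC₀lt : C₀ < ε * (n:ℝ) := by
    rw [div_lt_iff₀ hε] at hNgt
    linarith
  calc C₀ * ((n:ℝ)^(2-2*γ))⁻¹ ≤ C₀ * ((n:ℝ))⁻¹ := by
        apply mul_le_mul_of_nonneg_left _ hC₀pos.le
        exact inv_anti₀ hN0 hge
    _ < ε := by
        rw [← div_eq_mul_inv, div_lt_iff₀ hN0]
        linarith
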